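/- Let p > 1 be an integer and m a positive integer, and let k = min(p, m+1) ≥ 2. In the game N^m_{p, k-1} (Nim with m coins and p-index k-1), the position X = (p, p, ..., p, 0, ..., 0) with k-1 coordinates equal to p has no option (y^1, ..., y^m) with y^1 ⊕_p ⋯ ⊕_p y^m = 0. Consequently the p-saturation index of Nim with m coins is exactly min(p, m+1). -/

import Mathlib

/-!
For `j ≥ min p (m + 1)` the Sprague-Grundy function of `N^m_{p,j}` is the nim-sum `⊕_p`: no move
preserves it, and every smaller value is reached by a move that touches fewer than `min p (m + 1)`
coins. In the position with `n ≤ m` coins equal to `p`, where `n < p`, a move touching fewer than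
`n` coins leaves between `1` and `n` coins equal to `p`, so the `p`-digit of the nim-sum of such an
option is nonzero. With `n = k - 1` this is the first claim; for `j < k` the position with
`n = max j 1` has nonzero value in `N^m_{p,m+1}`, but in `N^m_{p,j}` it has no option of value `0`.
-/

/-- The `L`-th digit of `x` in base `p`. -/
def digit (p L x : ℕ) : ℕ := x / p ^ L % p

/-- `p`-ary addition without carry of a finite family: the `L`-th `p`-ary digit
is the sum of the `L`-th digits mod `p` (iterated `⊕_p`). -/
def oplusSum {ι : Type*} (p : ℕ) (s : Finset ι) (f : ι → ℕ) : ℕ :=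
  ∑ L ∈ Finset.range (∑ i ∈ s, f i + 1), (∑ i ∈ s, digit p L (f i)) % p * p ^ L

/-- `p`-adic order of a natural number, with `ord 0 = ∞`. -/
noncomputable def ordE (p x : ℕ) : ℕ∞ := if x = 0 then ⊤ else (padicValNat p x : ℕ∞)

/-- Legal move in Nim with `m` coins and `p`-index `k`. -/
def NimMove (p k : ℕ) {m : ℕ} (X Y : Fin m → ℕ) : Prop :=
  (∀ i, Y i ≤ X i) ∧
    0 < (Finset.univ.filter fun i => X i ≠ Y i).card ∧
    (Finset.univ.filter fun i => X i ≠ Y i).card < k ∧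
    ordE p (∑ i, (X i - Y i)) = ⨅ i, ordE p (X i - Y i)

/-- Sprague-Grundy value computed with fuel bounding the total number of tokens. -/
noncomputable def sgAux (p k m : ℕ) : ℕ → (Fin m → ℕ) → ℕ
  | 0, _ => 0
  | n + 1, X => sInf {v : ℕ | ∀ Y : Fin m → ℕ, NimMove p k X Y → sgAux p k m n Y ≠ v}

/-- The Sprague-Grundy function of `N^m_{p,k}`. -/
noncomputable def nimSg (p k : ℕ) {m : ℕ} (X : Fin m → ℕ) : ℕ :=
  sgAux p k m (∑ i, X i + 1) X

open Finset

theorem exists_le_sum_eq {ι : Type*} [Fintype ι] [DecidableEq ι] (f : ι → ℕ) {s : ℕ}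
    (hs : s ≤ ∑ i, f i) : ∃ c ≤ f, ∑ i, c i = s := by
  induction s with
  | zero => exact ⟨0, fun _ => Nat.zero_le _, by simp⟩
  | succ s ih =>
    obtain ⟨c, hcf, hc⟩ := ih (by omega)
    obtain ⟨i₀, hi₀⟩ : ∃ i, c i < f i := by
      by_contra! h
      have := sum_le_sum fun i (_ : i ∈ univ) => h i
      omega
    refine ⟨Function.update c i₀ (c i₀ + 1), fun i => ?_, ?_⟩
    · rcases eq_or_ne i i₀ with rfl | hi
      · simpa using hi₀
      · simpa [hi] using hcf i
    · rw [sum_update_of_mem (mem_univ i₀), ← hc, ← add_sum_erase _ _ (mem_univ i₀),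
        sdiff_singleton_eq_erase]
      ring

theorem card_filter_ne_zero_le_sum {ι : Type*} (s : Finset ι) (f : ι → ℕ) :
    #{i ∈ s | f i ≠ 0} ≤ ∑ i ∈ s, f i :=
  calc #{i ∈ s | f i ≠ 0} = ∑ i ∈ s with f i ≠ 0, 1 := card_eq_sum_ones _
    _ ≤ ∑ i ∈ s with f i ≠ 0, f i :=
      sum_le_sum fun _ hi => Nat.one_le_iff_ne_zero.2 (mem_filter.1 hi).2
    _ ≤ ∑ i ∈ s, f i := sum_le_sum_of_subset (filter_subset _ _)

theorem exists_add_mod_eq {p : ℕ} (hp : 0 < p) (a : ℕ) {b : ℕ} (hb : b < p) :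
    ∃ t < p, (t + a) % p = b := by
  refine ⟨(b + (p - 1) * a) % p, Nat.mod_lt _ hp, ?_⟩
  obtain ⟨q, rfl⟩ : ∃ q, p = q + 1 := ⟨p - 1, by omega⟩
  rw [Nat.mod_add_mod, Nat.add_sub_cancel, add_assoc, ← Nat.succ_mul, Nat.add_mul_mod_self_left,
    Nat.mod_eq_of_lt hb]

section Digits

variable {p : ℕ}

theorem digit_zero (x : ℕ) : digit p 0 x = x % p := by
  simp [digit]

theorem digit_succ (L x : ℕ) : digit p (L + 1) x = digit p L (x / p) := by
  simp [digit, Nat.div_div_eq_div_mul, pow_succ']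

theorem digit_add (L n x : ℕ) : digit p (L + n) x = digit p n (x / p ^ L) := by
  simp [digit, Nat.div_div_eq_div_mul, pow_add]

theorem digit_lt (hp : 0 < p) (L x : ℕ) : digit p L x < p :=
  Nat.mod_lt _ hp

theorem digit_le_div (L x : ℕ) : digit p L x ≤ x / p ^ L :=
  Nat.mod_le _ _

theorem digit_eq_zero_of_lt {L x : ℕ} (h : x < p ^ L) : digit p L x = 0 := by
  simp [digit, Nat.div_eq_of_lt h]

theorem digit_add_mul_pow (hp : 0 < p) (L y e : ℕ) :
    digit p L (y + e * p ^ L) = (digit p L y + e) % p := by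
  simp [digit, Nat.add_mul_div_right _ _ (pow_pos hp L)]

theorem eq_of_forall_digit_eq (hp : 1 < p) {a b : ℕ} (h : ∀ L, digit p L a = digit p L b) :
    a = b := by
  induction hab : a + b using Nat.strong_induction_on generalizing a b with
  | _ n ih =>
    rcases Nat.eq_zero_or_pos n with rfl | hn
    · omega
    have hdiv : a / p = b / p := by
      refine ih (a / p + b / p) ?_ (fun L => by simpa [digit_succ] using h (L + 1)) rfl
      have := Nat.div_le_self a p
      have := Nat.div_le_self b p
      rcases Nat.eq_zero_or_pos a with ha | ha
      · have := Nat.div_lt_self (show 0 < b by omega) hp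
        omega
      · have := Nat.div_lt_self ha hp
        omega
    have hmod : a % p = b % p := by simpa [digit_zero] using h 0
    rw [← Nat.div_add_mod a p, ← Nat.div_add_mod b p, hdiv, hmod]

theorem exists_digit_lt_of_lt (hp : 1 < p) {v g : ℕ} (h : v < g) :
    ∃ L, digit p L v < digit p L g ∧ ∀ L' > L, digit p L' v = digit p L' g := by
  induction g using Nat.strong_induction_on generalizing v with
  | _ g ih =>
    have hle : v / p ≤ g / p := Nat.div_le_div_right h.le
    rcases hle.eq_or_lt with hdiv | hdiv
    · refine ⟨0, ?_, fun L' hL' => ?_⟩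
      · have hv := Nat.div_add_mod v p
        have hg := Nat.div_add_mod g p
        rw [hdiv] at hv
        rw [digit_zero, digit_zero]
        omega
      · obtain ⟨L, rfl⟩ := Nat.exists_eq_add_of_lt hL'
        rw [zero_add, digit_succ, digit_succ, hdiv]
    · obtain ⟨L, hlt, hhigh⟩ := ih (g / p) (Nat.div_lt_self (by omega) hp) hdiv
      refine ⟨L + 1, by simpa [digit_succ] using hlt, fun L' hL' => ?_⟩
      obtain ⟨L'', rfl⟩ := Nat.exists_eq_add_of_lt hL'
      rw [show L + 1 + L'' + 1 = L + L'' + 1 + 1 by omega, digit_succ _ v, digit_succ _ g]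
      exact hhigh (L + L'' + 1) (by omega)

theorem digit_pow_mul_add {L r : ℕ} (hr : r < p ^ L) (q L' : ℕ) :
    digit p L' (p ^ L * q + r) = if L' < L then digit p L' r else digit p (L' - L) q := by
  induction L generalizing r L' with
  | zero => simp_all
  | succ L ih =>
    rcases Nat.eq_zero_or_pos p with rfl | hp
    · simp_all [digit]
    cases L' with
    | zero => simp [digit_zero, pow_succ, mul_comm _ p, mul_assoc]
    | succ L' =>
      have hr' : r / p < p ^ L := Nat.div_lt_of_lt_mul (by rwa [mul_comm, ← pow_succ])
      have hdiv : (p ^ (L + 1) * q + r) / p = p ^ L * q + r / p := by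
        rw [pow_succ, mul_comm _ p, mul_assoc, Nat.mul_add_div hp]
      simp [digit_succ, hdiv, ih hr']

theorem digit_sub_of_le_mod (hp : 0 < p) {q c : ℕ} (hc : c ≤ q % p) (n : ℕ) :
    digit p n (q - c) = if n = 0 then q % p - c else digit p n q := by
  have hlt : q % p - c < p := (Nat.sub_le _ _).trans_lt (Nat.mod_lt _ hp)
  have hq : q - c = (q % p - c) + p * (q / p) := by
    have := Nat.div_add_mod q p
    generalize q % p = r at *
    omega
  cases n with
  | zero => simp [digit_zero, hq, Nat.mod_eq_of_lt hlt]
  | succ n => simp [digit_succ, hq, Nat.add_mul_div_left _ _ hp, Nat.div_eq_of_lt hlt]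

theorem digit_pow_mul_div_sub_add (hp : 0 < p) {L c r x : ℕ} (hc : c ≤ digit p L x)
    (hr : r < p ^ L) (L' : ℕ) : digit p L' (p ^ L * (x / p ^ L - c) + r) =
      if L' < L then digit p L' r else if L' = L then digit p L x - c else digit p L' x := by
  rw [digit_pow_mul_add hr]
  split_ifs with h1 h2
  · rfl
  · rw [digit_sub_of_le_mod hp hc, if_pos (by omega)]
    rfl
  · obtain ⟨n, rfl⟩ := Nat.exists_eq_add_of_le (not_lt.1 h1)
    rw [digit_sub_of_le_mod hp hc, if_neg (by omega), Nat.add_sub_cancel_left, digit_add]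

theorem digit_mod_pow (L x L' : ℕ) (h : L' < L) : digit p L' (x % p ^ L) = digit p L' x := by
  rcases Nat.eq_zero_or_pos p with rfl | hp
  · simp [digit, zero_pow (show L ≠ 0 by omega)]
  conv_rhs => rw [← Nat.div_add_mod x (p ^ L)]
  rw [digit_pow_mul_add (Nat.mod_lt _ (pow_pos hp L)), if_pos h]

theorem pow_mul_div_sub_add_le_and_sub_eq {L c r x : ℕ} (hc : c ≤ digit p L x)
    (hr : r ≤ c * p ^ L + x % p ^ L) :
    p ^ L * (x / p ^ L - c) + r ≤ x ∧
      x - (p ^ L * (x / p ^ L - c) + r) = c * p ^ L + x % p ^ L - r := by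
  have hx := Nat.div_add_mod x (p ^ L)
  have hcx : c * p ^ L ≤ p ^ L * (x / p ^ L) := by
    rw [mul_comm]; exact Nat.mul_le_mul_left _ (hc.trans (digit_le_div L x))
  have hsub : p ^ L * (x / p ^ L - c) = p ^ L * (x / p ^ L) - c * p ^ L := by
    rw [Nat.mul_sub, mul_comm c]
  omega

theorem sum_range_mul_pow_lt (hp : 0 < p) {t : ℕ → ℕ} (ht : ∀ L, t L < p) (N : ℕ) :
    ∑ L ∈ range N, t L * p ^ L < p ^ N := by
  induction N with
  | zero => simp
  | succ N ih =>
    rw [sum_range_succ, pow_succ]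
    nlinarith [ht N, pow_pos hp N]

theorem digit_sum_range_mul_pow (hp : 0 < p) {t : ℕ → ℕ} (ht : ∀ L, t L < p) (N L : ℕ) :
    digit p L (∑ L' ∈ range N, t L' * p ^ L') = if L < N then t L else 0 := by
  induction N generalizing L with
  | zero => simp [digit]
  | succ N ih =>
    rw [sum_range_succ, add_comm, mul_comm, digit_pow_mul_add (sum_range_mul_pow_lt hp ht N)]
    rcases lt_trichotomy L N with h | rfl | h
    · simp [h, ih L, show L < N + 1 by omega]
    · simp [digit, Nat.mod_eq_of_lt (ht L)]
    · simp [show ¬ L < N by omega, show ¬ L < N + 1 by omega,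
        digit_eq_zero_of_lt ((ht N).trans_le (Nat.le_self_pow (show L - N ≠ 0 by omega) p))]

theorem digit_one_of_le {x : ℕ} (hp : 1 < p) (hx : x ≤ p) :
    digit p 1 x = if x = p then 1 else 0 := by
  rcases hx.eq_or_lt with rfl | hx
  · simp [digit, Nat.div_self (by omega : 0 < x), Nat.mod_eq_of_lt hp]
  · simp [hx.ne, digit_eq_zero_of_lt (by rwa [pow_one] : x < p ^ 1)]

theorem digit_oplusSum {ι : Type*} (hp : 1 < p) (s : Finset ι) (f : ι → ℕ) (L : ℕ) :
    digit p L (oplusSum p s f) = (∑ i ∈ s, digit p L (f i)) % p := by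
  rw [oplusSum, digit_sum_range_mul_pow (by omega) (fun _ => Nat.mod_lt _ (by omega))]
  split_ifs with hL
  · rfl
  · have hf : ∀ i ∈ s, f i < p ^ L := fun i hi =>
      calc f i ≤ ∑ j ∈ s, f j := single_le_sum (fun _ _ => Nat.zero_le _) hi
        _ < p ^ L := (Nat.lt_pow_self hp).trans_le (Nat.pow_le_pow_right (by omega) (by omega))
    simp [sum_congr rfl fun i hi => digit_eq_zero_of_lt (hf i hi)]

end Digits

section Order

variable {p : ℕ}

theorem ordE_eq_emultiplicity (hp : 1 < p) (x : ℕ) : ordE p x = emultiplicity p x := by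
  rcases eq_or_ne x 0 with rfl | hx
  · simp [ordE]
  · rw [ordE, if_neg hx, padicValNat_eq_emultiplicity_of_ne_one (by omega) hx]

theorem natCast_le_ordE_iff (hp : 1 < p) {k x : ℕ} : (k : ℕ∞) ≤ ordE p x ↔ p ^ k ∣ x := by
  rw [ordE_eq_emultiplicity hp, pow_dvd_iff_le_emultiplicity]

theorem ordE_sum_eq_iInf_iff {ι : Type*} [Fintype ι] (hp : 1 < p) (d : ι → ℕ) :
    ordE p (∑ i, d i) = ⨅ i, ordE p (d i) ↔ ∀ k, p ^ k ∣ ∑ i, d i → ∀ i, p ^ k ∣ d i := by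
  simp only [le_antisymm_iff (a := ordE p _), ← ENat.forall_natCast_le_iff_le, le_iInf_iff,
    natCast_le_ordE_iff hp]
  exact ⟨fun h k hk i => h.1 i k hk,
    fun h => ⟨fun i k hk => h k hk i, fun k hk => dvd_sum fun i _ => hk i⟩⟩

theorem ordE_sum_eq_iInf_of_dvd {ι : Type*} [Fintype ι] [DecidableEq ι] (hp : 1 < p)
    {d : ι → ℕ} {L : ℕ} (i₀ : ι) (hdvd : ∀ i ≠ i₀, p ^ L ∣ d i)
    (hsum : ¬ p ^ (L + 1) ∣ ∑ i, d i) : ordE p (∑ i, d i) = ⨅ i, ordE p (d i) := by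
  refine (ordE_sum_eq_iInf_iff hp d).2 fun k hk => ?_
  have hkL : k ≤ L := by
    by_contra h
    exact hsum ((pow_dvd_pow p (by omega)).trans hk)
  have hrest : ∀ i ≠ i₀, p ^ k ∣ d i := fun i hi => (pow_dvd_pow p hkL).trans (hdvd i hi)
  intro i
  by_cases hi : i = i₀
  · subst hi
    rw [← sum_erase_add _ _ (mem_univ i)] at hk
    exact (Nat.dvd_add_right (dvd_sum fun j hj => hrest j (ne_of_mem_erase hj))).1 hk
  · exact hrest i hi

theorem ordE_sum_eq_iInf_of_eq_mul_pow {ι : Type*} [Fintype ι] [DecidableEq ι] (hp : 1 < p)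
    {d c : ι → ℕ} {L : ℕ} (i₀ : ι) (hd : ∀ i ≠ i₀, d i = c i * p ^ L) (hd₀ : 0 < d i₀)
    (hd₀_lt : d i₀ < (c i₀ + 1) * p ^ L) (hc : ∑ i, c i < p) :
    ordE p (∑ i, d i) = ⨅ i, ordE p (d i) := by
  refine ordE_sum_eq_iInf_of_dvd hp i₀ (fun i hi => ⟨c i, by rw [hd i hi, mul_comm]⟩)
    (Nat.not_dvd_of_pos_of_lt (hd₀.trans_le (single_le_sum (fun i _ => Nat.zero_le (d i))
      (mem_univ i₀))) ?_)
  calc ∑ i, d i = d i₀ + ∑ i ∈ univ.erase i₀, c i * p ^ L := by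
        rw [← add_sum_erase _ _ (mem_univ i₀)]
        exact congrArg _ (sum_congr rfl fun i hi => hd i (ne_of_mem_erase hi))
    _ < (c i₀ + 1) * p ^ L + ∑ i ∈ univ.erase i₀, c i * p ^ L := by gcongr
    _ = (∑ i, c i + 1) * p ^ L := by
        rw [← add_sum_erase _ _ (mem_univ i₀), ← sum_mul]
        ring
    _ ≤ p ^ (L + 1) := by
        rw [pow_succ, mul_comm (p ^ L)]
        exact Nat.mul_le_mul_right _ hc

end Order

section Moves

variable {p m : ℕ}

theorem NimMove.sum_lt {k : ℕ} {X Y : Fin m → ℕ} (h : NimMove p k X Y) :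
    ∑ i, Y i < ∑ i, X i := by
  obtain ⟨i, hi⟩ := card_pos.1 h.2.1
  exact sum_lt_sum (fun i _ => h.1 i)
    ⟨i, mem_univ i, lt_of_le_of_ne (h.1 i) (mem_filter.1 hi).2.symm⟩

/-- Let `p ^ L` be the exact power of `p` dividing the total `∑ (X i - Y i)`. The move condition
makes `p ^ L` divide every part, and the quotients then add up to a number prime to `p`, so the
`L`-th digits of the two nim-sums differ. -/
theorem NimMove.oplusSum_ne (hp : 1 < p) {k : ℕ} {X Y : Fin m → ℕ} (h : NimMove p k X Y) :
    oplusSum p univ Y ≠ oplusSum p univ X := by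
  intro hXY
  set d : Fin m → ℕ := fun i => X i - Y i
  have hS : ∑ i, d i ≠ 0 := by
    obtain ⟨i, hi⟩ := card_pos.1 h.2.1
    rw [Ne, sum_eq_zero_iff]
    intro h0
    have : X i - Y i = 0 := h0 i (mem_univ i)
    have := h.1 i
    exact (mem_filter.1 hi).2 (by omega)
  set L := padicValNat p (∑ i, d i)
  have hdvd : ∀ i, p ^ L ∣ d i := (ordE_sum_eq_iInf_iff hp d).1 h.2.2.2 L pow_padicValNat_dvd
  have hndvd : ¬ p ^ (L + 1) ∣ ∑ i, d i := by
    rw [Nat.pow_dvd_iff_le_padicValNat (by omega) hS]; omega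
  have hdigit : ∀ i, digit p L (X i) = (digit p L (Y i) + d i / p ^ L) % p := fun i => by
    rw [← digit_add_mul_pow (by omega), Nat.div_mul_cancel (hdvd i), Nat.add_sub_cancel' (h.1 i)]
  have hmod : ∑ i, digit p L (Y i) + ∑ i, d i / p ^ L ≡ ∑ i, digit p L (Y i) + 0 [MOD p] :=
    calc ∑ i, digit p L (Y i) + ∑ i, d i / p ^ L
        ≡ ∑ i, digit p L (X i) [MOD p] := by
          simp only [hdigit, Nat.ModEq, ← sum_nat_mod, ← sum_add_distrib]
      _ ≡ ∑ i, digit p L (Y i) + 0 [MOD p] := by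
          simp only [Nat.ModEq, add_zero, ← digit_oplusSum hp, hXY]
  obtain ⟨e, he⟩ := (Nat.modEq_zero_iff_dvd.1 (Nat.ModEq.add_left_cancel' _ hmod))
  refine hndvd ⟨e, ?_⟩
  rw [← sum_congr rfl fun i _ => Nat.div_mul_cancel (hdvd i), ← sum_mul, he, pow_succ]
  ring

/-- `p ^ L * (x / p ^ L - c) + r` is `x` with its `L`-th digit lowered by `c` and its digits
below `L` replaced by those of `r`. -/
theorem nimMove_pow_mul_div_sub_add (hp : 1 < p) {j : ℕ} (hj : min p (m + 1) ≤ j)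
    {X c r : Fin m → ℕ} {L : ℕ} {i₀ : Fin m} (hc : ∀ i, c i ≤ digit p L (X i))
    (hr : ∀ i, r i < p ^ L) (hr₀ : ∀ i ≠ i₀, r i = X i % p ^ L) (hci₀ : c i₀ ≠ 0)
    (hcp : ∑ i, c i < p) :
    NimMove p j X fun i => p ^ L * (X i / p ^ L - c i) + r i := by
  set Y : Fin m → ℕ := fun i => p ^ L * (X i / p ^ L - c i) + r i
  have hpL : 0 < p ^ L := pow_pos (by omega) L
  have hpc₀ : p ^ L ≤ c i₀ * p ^ L := Nat.le_mul_of_pos_left _ (Nat.pos_of_ne_zero hci₀)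
  have hrc : ∀ i, r i ≤ c i * p ^ L + X i % p ^ L := fun i => by
    by_cases hi : i = i₀
    · subst hi
      exact ((hr i).le.trans hpc₀).trans (Nat.le_add_right _ _)
    · rw [hr₀ i hi]; exact Nat.le_add_left _ _
  have hmove : ∀ i, Y i ≤ X i ∧ X i - Y i = c i * p ^ L + X i % p ^ L - r i :=
    fun i => pow_mul_div_sub_add_le_and_sub_eq (hc i) (hrc i)
  have hd : ∀ i ≠ i₀, X i - Y i = c i * p ^ L := fun i hi => by
    rw [(hmove i).2, hr₀ i hi, Nat.add_sub_cancel]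
  have hd₀ : 0 < X i₀ - Y i₀ := by
    rw [(hmove i₀).2]
    exact Nat.sub_pos_of_lt ((hr i₀).trans_le (hpc₀.trans (Nat.le_add_right _ _)))
  have hd₀_lt : X i₀ - Y i₀ < (c i₀ + 1) * p ^ L := by
    rw [(hmove i₀).2, add_one_mul]
    exact (Nat.sub_le _ _).trans_lt (Nat.add_lt_add_left (Nat.mod_lt _ hpL) _)
  have hchanged : univ.filter (fun i => X i ≠ Y i) = univ.filter (fun i => c i ≠ 0) := by
    ext i
    simp only [mem_filter, mem_univ, true_and]
    by_cases hi : i = i₀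
    · subst hi
      exact iff_of_true (by omega) hci₀
    · have := (hmove i).1
      rw [← mul_ne_zero_iff_right hpL.ne', ← hd i hi]
      omega
  refine ⟨fun i => (hmove i).1, ?_, ?_, ordE_sum_eq_iInf_of_eq_mul_pow hp i₀ hd hd₀ hd₀_lt hcp⟩
  · rw [hchanged]
    exact card_pos.2 ⟨i₀, by simp [hci₀]⟩
  · rw [hchanged]
    have := card_filter_ne_zero_le_sum univ c
    have := (card_filter_le univ fun i => c i ≠ 0).trans_eq (Finset.card_fin m)
    omega

theorem oplusSum_pow_mul_div_sub_add (hp : 1 < p) {X c r : Fin m → ℕ} {L v : ℕ}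
    (hc : ∀ i, c i ≤ digit p L (X i)) (hr : ∀ i, r i < p ^ L)
    (hlow : ∀ L' < L, (∑ i, digit p L' (r i)) % p = digit p L' v)
    (hmid : (∑ i, (digit p L (X i) - c i)) % p = digit p L v)
    (hhigh : ∀ L' > L, digit p L' (oplusSum p univ X) = digit p L' v) :
    oplusSum p univ (fun i => p ^ L * (X i / p ^ L - c i) + r i) = v := by
  refine eq_of_forall_digit_eq hp fun L' => ?_
  simp only [digit_oplusSum hp, digit_pow_mul_div_sub_add (by omega) (hc _) (hr _)]
  rcases lt_trichotomy L' L with h | rfl | h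
  · simpa [h] using hlow L' h
  · simpa using hmid
  · simp [h.ne', h.not_gt, ← hhigh L' h, digit_oplusSum hp]

/-- With `L` the highest digit where `v` and `g = ⊕ X` differ, the `L`-th digits of `X` are
lowered by a total of `s = g_L - v_L < p` units, spread over fewer than `min p (m + 1)`
coordinates, and the digits below `L` of one lowered coordinate are chosen to fix the lower digits
of the nim-sum. -/
theorem exists_nimMove_oplusSum_eq {j : ℕ} (hp : 1 < p) (hj : min p (m + 1) ≤ j)
    (X : Fin m → ℕ) {v : ℕ} (hv : v < oplusSum p univ X) :
    ∃ Y, NimMove p j X Y ∧ oplusSum p univ Y = v := by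
  obtain ⟨L, hlt, hhigh⟩ := exists_digit_lt_of_lt hp hv
  obtain ⟨s, hs_def⟩ : ∃ s, s = digit p L (oplusSum p univ X) - digit p L v := ⟨_, rfl⟩
  have hsp : s < p := by
    have := digit_lt (p := p) (by omega) L (oplusSum p univ X)
    omega
  have hsum : (∑ i, digit p L (X i)) % p = digit p L (oplusSum p univ X) :=
    (digit_oplusSum hp _ _ _).symm
  have hs : s ≤ ∑ i, digit p L (X i) := by
    have := Nat.mod_le (∑ i, digit p L (X i)) p
    omega
  obtain ⟨c, hcX, hcs⟩ := exists_le_sum_eq _ hs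
  obtain ⟨i₀, -, hci₀⟩ := exists_ne_zero_of_sum_ne_zero (s := univ) (f := c) (by omega)
  choose t htp ht using fun L' =>
    exists_add_mod_eq (by omega) (∑ i ∈ univ.erase i₀, digit p L' (X i)) (digit_lt (p := p)
      (by omega) L' v)
  set w := ∑ L' ∈ range L, t L' * p ^ L'
  have hw : w < p ^ L := sum_range_mul_pow_lt (by omega) htp L
  set r : Fin m → ℕ := fun i => if i = i₀ then w else X i % p ^ L
  have hr : ∀ i, r i < p ^ L := fun i => by
    by_cases hi : i = i₀
    · simp [r, hi, hw]
    · simp [r, hi, Nat.mod_lt _ (pow_pos (by omega : 0 < p) L)]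
  refine ⟨_, nimMove_pow_mul_div_sub_add hp hj hcX hr (fun i hi => if_neg hi) hci₀
    (by omega), oplusSum_pow_mul_div_sub_add hp hcX hr (fun L' hL' => ?_) ?_
    (fun L' hL' => (hhigh L' hL').symm)⟩
  · rw [← add_sum_erase _ _ (mem_univ i₀), sum_congr rfl fun i hi => by
      rw [show r i = X i % p ^ L from if_neg (ne_of_mem_erase hi), digit_mod_pow _ _ _ hL']]
    simpa [r, w, digit_sum_range_mul_pow (by omega : 0 < p) htp, hL'] using ht L'
  · rw [sum_tsub_distrib _ fun i _ => hcX i, hcs]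
    have hdiv := Nat.div_add_mod (∑ i, digit p L (X i)) p
    have : ∑ i, digit p L (X i) - s = digit p L v + p * ((∑ i, digit p L (X i)) / p) := by
      omega
    rw [this, Nat.add_mul_mod_self_left, Nat.mod_eq_of_lt (digit_lt (by omega) L v)]

theorem oplusSum_ne_zero_of_card_lt {n : ℕ} (hp : 1 < p) (hnp : n < p)
    (hnm : n ≤ m) {W Y : Fin m → ℕ} (hW : W = fun i : Fin m => if (i : ℕ) < n then p else 0)
    (hYW : ∀ i, Y i ≤ W i) (hcard : #{i | W i ≠ Y i} < n) :
    oplusSum p univ Y ≠ 0 := by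
  subst hW
  simp only at hYW hcard
  have hfirst : #{i : Fin m | (i : ℕ) < n} = n := by rw [Fin.card_filter_val_lt]; omega
  have hsub : univ.filter (fun i => Y i = p) ⊆ univ.filter (fun i : Fin m => (i : ℕ) < n) :=
    fun i => by
      have := hYW i
      simp only [mem_filter, mem_univ, true_and]
      split_ifs at this with hi <;> omega
  obtain ⟨i, hi, hiY⟩ := exists_mem_notMem_of_card_lt_card (hcard.trans_eq hfirst.symm)
  have hne : (univ.filter fun i => Y i = p).Nonempty := ⟨i, by simp_all⟩
  have hdigit : digit p 1 (oplusSum p univ Y) = #{i | Y i = p} := by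
    have := (card_le_card hsub).trans_lt (hfirst ▸ hnp)
    rw [digit_oplusSum hp, sum_congr rfl fun i _ => digit_one_of_le hp ((hYW i).trans
      (by split_ifs <;> omega)), sum_boole, Nat.cast_id, Nat.mod_eq_of_lt this]
  intro h0
  rw [h0, digit_eq_zero_of_lt (by positivity)] at hdigit
  exact hne.card_pos.ne hdigit

end Moves

section SpragueGrundy

variable {p k m : ℕ}

theorem sgAux_eq_nimSg {n : ℕ} {X : Fin m → ℕ} (h : ∑ i, X i < n) :
    sgAux p k m n X = nimSg p k X := by
  induction n using Nat.strong_induction_on generalizing X with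
  | _ n ih =>
    obtain ⟨n, rfl⟩ : ∃ n', n = n' + 1 := ⟨n - 1, by omega⟩
    have hopt : ∀ Y, NimMove p k X Y → sgAux p k m n Y = sgAux p k m (∑ i, X i) Y :=
      fun Y hY => by
        rw [ih n (by omega) (by have := hY.sum_lt; omega), ih _ (by omega) hY.sum_lt]
    simp only [nimSg, sgAux]
    congr 1
    ext v
    exact forall₂_congr fun Y hY => by rw [hopt Y hY]

theorem nimSg_eq_sInf (X : Fin m → ℕ) :
    nimSg p k X = sInf {v | ∀ Y, NimMove p k X Y → nimSg p k Y ≠ v} := by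
  rw [nimSg, sgAux]
  congr 1
  ext v
  exact forall₂_congr fun Y hY => by rw [sgAux_eq_nimSg hY.sum_lt]

theorem nimSg_eq_of_forall {f : (Fin m → ℕ) → ℕ}
    (hne : ∀ X Y, NimMove p k X Y → f Y ≠ f X)
    (hex : ∀ X v, v < f X → ∃ Y, NimMove p k X Y ∧ f Y = v) (X : Fin m → ℕ) :
    nimSg p k X = f X := by
  induction hX : ∑ i, X i using Nat.strong_induction_on generalizing X with
  | _ n ih =>
    have hopt : ∀ Y, NimMove p k X Y → nimSg p k Y = f Y := fun Y hY =>
      ih _ (hX ▸ hY.sum_lt) Y rfl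
    rw [nimSg_eq_sInf]
    refine IsLeast.csInf_eq ⟨fun Y hY => hopt Y hY ▸ hne X Y hY, fun v hv => ?_⟩
    by_contra! hlt
    obtain ⟨Y, hY, rfl⟩ := hex X v hlt
    exact hv Y hY (hopt Y hY)

theorem exists_nimMove_nimSg_eq_zero {X : Fin m → ℕ} (h : nimSg p k X ≠ 0) :
    ∃ Y, NimMove p k X Y ∧ nimSg p k Y = 0 := by
  by_contra! hY
  exact h ((nimSg_eq_sInf X).trans (Nat.sInf_eq_zero.2 (Or.inl hY)))

theorem nimSg_eq_oplusSum (hp : 1 < p) (hk : min p (m + 1) ≤ k) (X : Fin m → ℕ) :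
    nimSg p k X = oplusSum p univ X :=
  nimSg_eq_of_forall (fun _ _ h => h.oplusSum_ne hp)
    (fun X _ hv => exists_nimMove_oplusSum_eq hp hk X hv) X

end SpragueGrundy

theorem stmt4 (p m : ℕ) (hp : 1 < p) (hm : 1 ≤ m) (k : ℕ) (hk : k = min p (m + 1))
    (X : Fin m → ℕ) (hX : X = fun i : Fin m => if (i : ℕ) < k - 1 then p else 0) :
    (¬ ∃ Y : Fin m → ℕ, NimMove p (k - 1) X Y ∧ oplusSum p Finset.univ Y = 0) ∧
      IsLeast {j : ℕ | ∀ Z : Fin m → ℕ, nimSg p j Z = nimSg p (m + 1) Z} k := by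
  have hsat : ∀ Z : Fin m → ℕ, nimSg p (m + 1) Z = oplusSum p univ Z :=
    nimSg_eq_oplusSum hp (min_le_right _ _)
  refine ⟨fun ⟨Y, hY, hY0⟩ => oplusSum_ne_zero_of_card_lt hp (by omega) (by omega)
    hX hY.1 hY.2.2.1 hY0, fun Z => by rw [hsat, nimSg_eq_oplusSum hp hk.ge], fun j hj => ?_⟩
  by_contra! hjk
  set n := max j 1
  have hZ := oplusSum_ne_zero_of_card_lt (p := p) (n := n) (Y := fun i : Fin m =>
    if (i : ℕ) < n then p else 0) hp (by omega) (by omega) rfl (fun _ => le_rfl)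
    (by simp only [ne_eq, not_true_eq_false, filter_false, card_empty]; omega)
  obtain ⟨Y, hY, hY0⟩ := exists_nimMove_nimSg_eq_zero (by rwa [hj, hsat])
  refine oplusSum_ne_zero_of_card_lt hp (by omega) (by omega) rfl hY.1
    (hY.2.2.1.trans_le (le_max_left j 1)) ?_
  rw [← hsat, ← hj, hY0]
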